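/- arXiv:1505.04971 — 3 statements merged into one kernel-verified Lean document; each statement's English description precedes it below -/
import Mathlib

section
/- Let F be a cdf with right endpoint 0 such that 1 − F(−x) = x^α c(1/x) exp(∫_1^{1/x} ε(t)/t dt) for x > 0 (Karamata representation, with c(t) → c > 0 and ε(t) → 0). Then for any sequence u_N → ∞, E[e^{u_N ξ}] ~ (1 − F(−1/u_N)) · Γ(1+α) as N → ∞, where ξ has cdf F. -/
open MeasureTheory ProbabilityTheory Filter


lemma stmt12_Ilim (εfun : ℝ → ℝ) (hε : Tendsto εfun atTop (nhds 0)) (δ : ℝ) (hδ : 0 < δ) :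
    ∃ B : ℝ, 1 ≤ B ∧ ∀ y₁ y₂ : ℝ, B ≤ y₁ → y₁ ≤ y₂ →
      |(∫ t in (1:ℝ)..y₂, εfun t / t) - ∫ t in (1:ℝ)..y₁, εfun t / t|
        ≤ δ * (Real.log y₂ - Real.log y₁) := by
  obtain ⟨A, hA⟩ : ∃ A : ℝ, ∀ t ≥ A, |εfun t| ≤ δ := by
    obtain ⟨A, hA⟩ := (Metric.tendsto_nhds.mp hε δ hδ).exists_forall_of_atTop
    exact ⟨A, fun t ht => by simpa [Real.dist_eq] using (hA t ht).le⟩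
  set f : ℝ → ℝ := fun t => εfun t / t with hf
  by_cases hcase : ∀ y ≥ max A 1, IntervalIntegrable f volume 1 y
  · refine ⟨max A 1, le_max_right _ _, fun y₁ y₂ h1 h12 => ?_⟩
    have hy₁1 : (1:ℝ) ≤ y₁ := le_trans (le_max_right _ _) h1
    have hy₁0 : 0 < y₁ := lt_of_lt_of_le one_pos hy₁1
    have hy₂0 : 0 < y₂ := lt_of_lt_of_le hy₁0 h12
    have hi1 : IntervalIntegrable f volume 1 y₁ := hcase y₁ h1
    have hi2 : IntervalIntegrable f volume 1 y₂ := hcase y₂ (le_trans h1 h12)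
    have hsub : Set.uIcc y₁ y₂ ⊆ Set.uIcc 1 y₂ := by
      rw [Set.uIcc_of_le h12, Set.uIcc_of_le (le_trans hy₁1 h12)]
      exact Set.Icc_subset_Icc hy₁1 le_rfl
    have hi12 : IntervalIntegrable f volume y₁ y₂ := hi2.mono_set hsub
    have hadd : (∫ t in (1:ℝ)..y₂, f t) - ∫ t in (1:ℝ)..y₁, f t = ∫ t in y₁..y₂, f t := by
      rw [← intervalIntegral.integral_add_adjacent_intervals hi1 hi12]; ring
    rw [hadd]
    have hnorm : |∫ t in y₁..y₂, f t| ≤ ∫ t in y₁..y₂, |f t| := by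
      simpa [Real.norm_eq_abs] using intervalIntegral.norm_integral_le_integral_norm (f := f)
        (μ := volume) (a := y₁) (b := y₂) h12
    have hg : IntervalIntegrable (fun t => δ * (1/t)) volume y₁ y₂ := by
      apply ContinuousOn.intervalIntegrable
      apply ContinuousOn.mul continuousOn_const
      apply ContinuousOn.div continuousOn_const continuousOn_id
      intro x hx
      rw [Set.uIcc_of_le h12] at hx
      exact ne_of_gt (lt_of_lt_of_le hy₁0 hx.1)
    have hmono : ∫ t in y₁..y₂, |f t| ≤ ∫ t in y₁..y₂, δ * (1/t) := by
      apply intervalIntegral.integral_mono_on h12 hi12.abs hg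
      intro t ht
      have ht0 : 0 < t := lt_of_lt_of_le hy₁0 ht.1
      have htA : A ≤ t := le_trans (le_trans (le_max_left _ _) h1) ht.1
      rw [hf, abs_div, abs_of_pos ht0]
      rw [div_le_iff₀ ht0, mul_assoc, one_div, inv_mul_cancel₀ (ne_of_gt ht0), mul_one]
      exact hA t htA
    have hval : ∫ t in y₁..y₂, δ * (1/t) = δ * (Real.log y₂ - Real.log y₁) := by
      have h0 : (0:ℝ) ∉ Set.uIcc y₁ y₂ := by
        intro h; rw [Set.uIcc_of_le h12] at h; exact absurd h.1 (not_le.mpr hy₁0)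
      rw [intervalIntegral.integral_const_mul]
      rw [show (∫ x in y₁..y₂, 1/x) = Real.log (y₂/y₁) from integral_one_div h0]
      rw [Real.log_div (ne_of_gt hy₂0) (ne_of_gt hy₁0)]
    calc |∫ t in y₁..y₂, f t| ≤ ∫ t in y₁..y₂, |f t| := hnorm
      _ ≤ ∫ t in y₁..y₂, δ * (1/t) := hmono
      _ = δ * (Real.log y₂ - Real.log y₁) := hval
  · push_neg at hcase
    obtain ⟨y₀, hy₀B, hy₀⟩ := hcase
    refine ⟨y₀, le_trans (le_max_right _ _) hy₀B, fun y₁ y₂ h1 h12 => ?_⟩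
    have hy₀1 : (1:ℝ) ≤ y₀ := le_trans (le_max_right _ _) hy₀B
    have hnone : ∀ y, y₀ ≤ y → ¬ IntervalIntegrable f volume 1 y := by
      intro y hy hint
      exact hy₀ (hint.mono_set (by
        rw [Set.uIcc_of_le hy₀1, Set.uIcc_of_le (le_trans hy₀1 hy)]
        exact Set.Icc_subset_Icc le_rfl hy))
    rw [intervalIntegral.integral_undef (hnone y₁ h1),
        intervalIntegral.integral_undef (hnone y₂ (le_trans h1 h12)), sub_zero, abs_zero]
    have : Real.log y₁ ≤ Real.log y₂ := Real.log_le_log (lt_of_lt_of_le (lt_of_lt_of_le one_pos (le_trans hy₀1 h1)) le_rfl) h12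
    nlinarith

lemma stmt12_image : (fun z : ℝ => Real.exp (-z)) '' Set.Ioi 0 = Set.Ioo 0 1 := by
  ext t
  constructor
  · rintro ⟨z, hz, rfl⟩
    exact ⟨Real.exp_pos _, by simpa using Real.exp_lt_one_iff.mpr (neg_neg_iff_pos.mpr hz)⟩
  · rintro ⟨ht0, ht1⟩
    refine ⟨-Real.log t, ?_, by simp [Real.exp_log ht0]⟩
    simpa using Real.log_neg ht0 ht1

lemma stmt12_fubini {Ω : Type*} [MeasureSpace Ω] [IsProbabilityMeasure (ℙ : Measure Ω)]
    (ξ : Ω → ℝ) (hξ : Measurable ξ) (hle : ∀ᵐ ω ∂ℙ, ξ ω ≤ 0)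
    (G : ℝ → ℝ) (hG : ∀ x : ℝ, G x = (ℙ {ω | -x < ξ ω}).toReal)
    (v : ℝ) (hv : 0 < v) :
    ∫ ω, Real.exp (v * ξ ω) ∂ℙ = ∫ z in Set.Ioi (0:ℝ), Real.exp (-z) * G (z / v) := by
  have hmeas : Measurable fun ω => Real.exp (v * ξ ω) :=
    (Real.continuous_exp.measurable).comp (hξ.const_mul v)
  have hbdd : ∀ᵐ ω ∂ℙ, ‖Real.exp (v * ξ ω)‖ ≤ 1 := by
    filter_upwards [hle] with ω hω
    rw [Real.norm_eq_abs, abs_of_pos (Real.exp_pos _)]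
    exact Real.exp_le_one_iff.mpr (mul_nonpos_of_nonneg_of_nonpos hv.le hω)
  have hint : Integrable (fun ω => Real.exp (v * ξ ω)) ℙ :=
    (integrable_const (1:ℝ)).mono' hmeas.aestronglyMeasurable hbdd
  have hnn : 0 ≤ᵐ[ℙ] fun ω => Real.exp (v * ξ ω) :=
    Eventually.of_forall fun ω => (Real.exp_pos _).le
  rw [hint.integral_eq_integral_meas_lt hnn]
  set h : ℝ → ℝ := fun t => (ℙ {a | t < Real.exp (v * ξ a)}).toReal with hh
  have hzero : ∀ t : ℝ, 1 ≤ t → h t = 0 := by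
    intro t ht
    have hnull : ℙ {a | t < Real.exp (v * ξ a)} = 0 := by
      have hsub : {a | t < Real.exp (v * ξ a)} ⊆ {a | ¬ ξ a ≤ 0} := by
        intro a ha
        simp only [Set.mem_setOf_eq, not_le]
        by_contra hcon
        push_neg at hcon
        have hle1 : Real.exp (v * ξ a) ≤ 1 :=
          Real.exp_le_one_iff.mpr (mul_nonpos_of_nonneg_of_nonpos hv.le hcon)
        exact absurd (lt_of_le_of_lt ht ha) (not_lt.mpr hle1)
      exact measure_mono_null hsub (ae_iff.mp hle)
    simp [hh, hnull]
  have hstep1 : ∫ t in Set.Ioi (0:ℝ), h t = ∫ t in Set.Ioo (0:ℝ) 1, h t := by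
    refine setIntegral_eq_of_subset_of_forall_diff_eq_zero measurableSet_Ioi
      (Set.Ioo_subset_Ioi_self) (fun t ht => ?_)
    obtain ⟨ht0, htn⟩ := ht
    have : (1:ℝ) ≤ t := by
      by_contra hcon
      exact htn ⟨ht0, not_le.mp hcon⟩
    exact hzero t this
  have hstep2 : ∀ t ∈ Set.Ioo (0:ℝ) 1, h t = G (-Real.log t / v) := by
    intro t ht
    have hset : {a | t < Real.exp (v * ξ a)} = {a | -(-Real.log t / v) < ξ a} := by
      ext a
      simp only [Set.mem_setOf_eq]
      have hne : -(-Real.log t / v) = Real.log t / v := by ring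
      rw [hne, div_lt_iff₀ hv, mul_comm v (ξ a), ← Real.log_lt_iff_lt_exp ht.1]
    show (ℙ {a | t < Real.exp (v * ξ a)}).toReal = G (-Real.log t / v)
    rw [hG, hset]
  have hstep3 : ∫ t in Set.Ioo (0:ℝ) 1, h t = ∫ t in Set.Ioo (0:ℝ) 1, G (-Real.log t / v) :=
    setIntegral_congr_fun measurableSet_Ioo hstep2
  have hCOV : ∫ t in Set.Ioo (0:ℝ) 1, G (-Real.log t / v)
      = ∫ z in Set.Ioi (0:ℝ), Real.exp (-z) * G (z / v) := by
    rw [← stmt12_image]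
    rw [integral_image_eq_integral_abs_deriv_smul measurableSet_Ioi
      (f' := fun z => -Real.exp (-z))
      (fun x _ => by
        simpa [Function.comp_def] using ((Real.hasDerivAt_exp (-x)).comp x ((hasDerivAt_id x).neg)).hasDerivWithinAt)
      (fun x _ y _ hxy => by
        have := Real.exp_injective hxy
        linarith [this])
      (fun t => G (-Real.log t / v))]
    refine setIntegral_congr_fun measurableSet_Ioi (fun z hz => ?_)
    rw [abs_of_neg (neg_neg_iff_pos.mpr (Real.exp_pos _)), neg_neg, Real.log_exp, neg_neg,
      smul_eq_mul]
  change ∫ t in Set.Ioi (0:ℝ), h t = _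
  rw [hstep1, hstep3, hCOV]

lemma stmt12_gamma_int (p : ℝ) (hp : -1 < p) :
    IntegrableOn (fun z : ℝ => Real.exp (-z) * z ^ p) (Set.Ioi 0) := by
  have h := Real.GammaIntegral_convergent (show 0 < p + 1 by linarith)
  simpa [add_sub_cancel_right] using h

lemma stmt12_gamma_val (α : ℝ) (hα : 0 < α) :
    ∫ z in Set.Ioi (0:ℝ), Real.exp (-z) * z ^ α = Real.Gamma (1 + α) := by
  rw [Real.Gamma_eq_integral (by linarith : (0:ℝ) < 1 + α)]
  simp [add_sub_cancel_left]


/-- if the cdf `F` of `ξ` (with right endpoint 0) admits the Karamata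
representation `1 − F(−x) = x^α c(1/x) exp(∫_1^{1/x} ε(t)/t dt)` with `c(t) → c > 0`
and `ε(t) → 0`, then for any `u_N → ∞`,
`E[e^{u_N ξ}] ∼ (1 − F(−1/u_N)) Γ(1+α)` as `N → ∞`. -/
theorem stmt_12 {Ω : Type*} [MeasureSpace Ω] [IsProbabilityMeasure (ℙ : Measure Ω)]
    (α : ℝ) (hα : 0 < α)
    (ξ : Ω → ℝ) (hξ : Measurable ξ) (hle : ∀ᵐ ω ∂ℙ, ξ ω ≤ 0)
    (F : ℝ → ℝ) (hF : ∀ x : ℝ, F x = (ℙ {ω | ξ ω ≤ x}).toReal)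
    (hend : ∀ x : ℝ, x < 0 → F x < 1)
    (cfun εfun : ℝ → ℝ) (c : ℝ) (hc : 0 < c)
    (hcfun : Tendsto cfun atTop (nhds c))
    (hεfun : Tendsto εfun atTop (nhds 0))
    (hrep : ∀ x : ℝ, 0 < x →
      1 - F (-x) = x ^ α * cfun (1 / x) * Real.exp (∫ t in (1 : ℝ)..(1 / x), εfun t / t))
    (u : ℕ → ℝ) (hu : Tendsto u atTop atTop) :
    Tendsto
      (fun n : ℕ =>
        (∫ ω, Real.exp (u n * ξ ω) ∂ℙ) / ((1 - F (-(1 / u n))) * Real.Gamma (1 + α)))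
      atTop (nhds 1) := by
  classical
  set I : ℝ → ℝ := fun y => ∫ t in (1:ℝ)..y, εfun t / t with hI
  set G : ℝ → ℝ := fun x => 1 - F (-x) with hGdef
  -- basic facts about F and G
  have hFmono : Monotone F := by
    intro x y hxy
    rw [hF, hF]
    exact ENNReal.toReal_mono (measure_ne_top _ _)
      (measure_mono (fun ω hω => le_trans hω hxy))
  have hFnn : ∀ x, 0 ≤ F x := fun x => by rw [hF]; exact ENNReal.toReal_nonneg
  have hFle1 : ∀ x, F x ≤ 1 := fun x => by
    rw [hF]
    exact ENNReal.toReal_mono (by simp) prob_le_one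
  have hGle1 : ∀ x : ℝ, G x ≤ 1 := fun x => by
    simp only [hGdef]; linarith [hFnn (-x)]
  have hGnn : ∀ x : ℝ, 0 ≤ G x := fun x => by
    simp only [hGdef]; linarith [hFle1 (-x)]
  have hGpos : ∀ x : ℝ, 0 < x → 0 < G x := fun x hx => by
    simp only [hGdef]; linarith [hend (-x) (by linarith)]
  have hGmeas : Measurable G := by
    exact measurable_const.sub ((hFmono.measurable).comp measurable_neg)
  have hGprob : ∀ x : ℝ, G x = (ℙ {ω | -x < ξ ω}).toReal := by
    intro x
    have hsetc : {ω | -x < ξ ω} = {ω | ξ ω ≤ -x}ᶜ := by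
      ext ω; simp [not_le]
    have hcompl : ℙ ({ω | ξ ω ≤ -x}ᶜ) = 1 - ℙ {ω | ξ ω ≤ -x} :=
      prob_compl_eq_one_sub (show MeasurableSet {ω | ξ ω ≤ -x} from hξ measurableSet_Iic)
    rw [hGdef]
    simp only []
    rw [hsetc, hcompl, ENNReal.toReal_sub_of_le prob_le_one ENNReal.one_ne_top,
      ENNReal.toReal_one, hF]
  have hGrep : ∀ x : ℝ, 0 < x → G x = x ^ α * cfun (1/x) * Real.exp (I (1/x)) :=
    fun x hx => hrep x hx
  have hcpos : ∀ t : ℝ, 0 < t → 0 < cfun t := by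
    intro t ht
    have h := hGrep (1/t) (by positivity)
    rw [one_div_one_div] at h
    have h1 : 0 < G (1/t) := hGpos _ (by positivity)
    rw [h] at h1
    have hp : (0:ℝ) < (1/t) ^ α := Real.rpow_pos_of_pos (by positivity) α
    have he : (0:ℝ) < Real.exp (I t) := Real.exp_pos _
    by_contra hng
    push_neg at hng
    nlinarith [h1, mul_nonneg (mul_pos hp he).le (neg_nonneg.mpr hng)]
  have hRatio : ∀ v : ℝ, 0 < v → ∀ z : ℝ, 0 < z →
      G (z / v) / G (1 / v)
        = z ^ α * (cfun (v / z) / cfun v) * Real.exp (I (v / z) - I v) := by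
    intro v hv z hz
    have h1 := hGrep (z/v) (by positivity)
    have h2 := hGrep (1/v) (by positivity)
    rw [one_div_div] at h1
    rw [one_div_one_div] at h2
    rw [h1, h2, Real.div_rpow hz.le hv.le, Real.div_rpow zero_le_one hv.le, Real.one_rpow,
      Real.exp_sub]
    have hv0 : v ^ α ≠ 0 := ne_of_gt (Real.rpow_pos_of_pos hv α)
    have hcv : cfun v ≠ 0 := ne_of_gt (hcpos v hv)
    have hev : Real.exp (I v) ≠ 0 := Real.exp_ne_zero _
    field_simp
  -- constants
  set δ : ℝ := α / 2 with hδdef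
  have hδ : 0 < δ := by rw [hδdef]; positivity
  obtain ⟨A, hA1, hAc⟩ : ∃ A : ℝ, 1 ≤ A ∧ ∀ t : ℝ, A ≤ t → c/2 ≤ cfun t ∧ cfun t ≤ 3*c/2 := by
    obtain ⟨A₀, hA₀⟩ := (Metric.tendsto_nhds.mp hcfun (c/2) (by positivity)).exists_forall_of_atTop
    refine ⟨max A₀ 1, le_max_right _ _, fun t ht => ?_⟩
    have := hA₀ t (le_trans (le_max_left _ _) ht)
    rw [Real.dist_eq] at this
    obtain ⟨hl, hr⟩ := abs_lt.mp this
    exact ⟨by linarith, by linarith⟩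
  obtain ⟨B, hB1, hB⟩ := stmt12_Ilim εfun hεfun δ hδ
  set B₀ : ℝ := max A B with hB₀def
  have hB₀1 : 1 ≤ B₀ := le_trans hA1 (le_max_left _ _)
  have hB₀0 : 0 < B₀ := lt_of_lt_of_le one_pos hB₀1
  have hB₀A : A ≤ B₀ := le_max_left _ _
  have hB₀B : B ≤ B₀ := le_max_right _ _
  have hIbnd : ∀ y₁ y₂ : ℝ, B₀ ≤ y₁ → B₀ ≤ y₂ →
      |I y₂ - I y₁| ≤ δ * |Real.log y₂ - Real.log y₁| := by
    intro y₁ y₂ h1 h2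
    rcases le_total y₁ y₂ with hcmp | hcmp
    · have h := hB y₁ y₂ (le_trans hB₀B h1) hcmp
      have hlog : Real.log y₁ ≤ Real.log y₂ :=
        Real.log_le_log (lt_of_lt_of_le (lt_of_lt_of_le one_pos hB₀1) h1) hcmp
      calc |I y₂ - I y₁| ≤ δ * (Real.log y₂ - Real.log y₁) := h
        _ = δ * |Real.log y₂ - Real.log y₁| := by rw [abs_of_nonneg (by linarith)]
    · have h := hB y₂ y₁ (le_trans hB₀B h2) hcmp
      have hlog : Real.log y₂ ≤ Real.log y₁ :=
        Real.log_le_log (lt_of_lt_of_le (lt_of_lt_of_le one_pos hB₀1) h2) hcmp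
      rw [abs_sub_comm]
      calc |I y₁ - I y₂| ≤ δ * (Real.log y₁ - Real.log y₂) := h
        _ = δ * |Real.log y₂ - Real.log y₁| := by
            rw [abs_sub_comm, abs_of_nonneg (by linarith)]
  set c₂ : ℝ := (c/2) * Real.exp (I B₀) * B₀ ^ δ with hc₂def
  have hc₂ : 0 < c₂ := by
    rw [hc₂def]
    positivity
  have hGlb : ∀ v : ℝ, B₀ ≤ v → c₂ * v ^ (-(α+δ)) ≤ G (1/v) := by
    intro v hv
    have hv0 : 0 < v := lt_of_lt_of_le hB₀0 hv
    have h2 := hGrep (1/v) (by positivity)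
    rw [one_div_one_div] at h2
    have hIv : I B₀ - δ * (Real.log v - Real.log B₀) ≤ I v := by
      have h := hIbnd B₀ v le_rfl hv
      have hlog : Real.log B₀ ≤ Real.log v := Real.log_le_log hB₀0 hv
      rw [abs_of_nonneg (show (0:ℝ) ≤ Real.log v - Real.log B₀ by linarith)] at h
      have := (abs_le.mp h).1
      linarith
    have hexp : Real.exp (I B₀) * B₀ ^ δ * v ^ (-δ) ≤ Real.exp (I v) := by
      have heq : Real.exp (I B₀) * B₀ ^ δ * v ^ (-δ)
          = Real.exp (I B₀ - δ * (Real.log v - Real.log B₀)) := by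
        rw [Real.rpow_def_of_pos hB₀0, Real.rpow_def_of_pos hv0, ← Real.exp_add, ← Real.exp_add]
        ring_nf
      rw [heq]
      exact Real.exp_le_exp.mpr hIv
    have hcf : c/2 ≤ cfun v := (hAc v (le_trans hB₀A hv)).1
    have h1v : (1/v) ^ α = v ^ (-α) := by
      rw [one_div, Real.inv_rpow hv0.le, ← Real.rpow_neg hv0.le]
    have hsplit : v ^ (-(α+δ)) = v ^ (-α) * v ^ (-δ) := by
      rw [← Real.rpow_add hv0]; ring_nf
    rw [h2, h1v, hc₂def, hsplit]
    have hE : 0 ≤ Real.exp (I B₀) * B₀ ^ δ * v ^ (-δ) := by positivity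
    have hkey : (c/2) * (Real.exp (I B₀) * B₀ ^ δ * v ^ (-δ)) ≤ cfun v * Real.exp (I v) :=
      mul_le_mul hcf hexp hE (le_trans (by positivity) hcf)
    have hp : (0:ℝ) ≤ v ^ (-α) := (Real.rpow_pos_of_pos hv0 _).le
    nlinarith [mul_le_mul_of_nonneg_left hkey hp]
  set C : ℝ := max 3 (B₀ ^ (α+δ) / c₂) with hCdef
  have hC3 : (3:ℝ) ≤ C := le_max_left _ _
  have hC0 : (0:ℝ) ≤ C := by linarith
  have hUpper : ∀ v : ℝ, B₀ ≤ v → ∀ z : ℝ, 0 < z →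
      G (z/v) / G (1/v) ≤ C * (z ^ (α - δ) + z ^ (α + δ)) := by
    intro v hv z hz
    have hv0 : 0 < v := lt_of_lt_of_le hB₀0 hv
    have hsum0 : (0:ℝ) ≤ z ^ (α - δ) + z ^ (α + δ) := by positivity
    by_cases hzc : B₀ * z ≤ v
    · -- main region
      have hvz : B₀ ≤ v / z := (le_div_iff₀ hz).mpr hzc
      have hvz0 : 0 < v / z := by positivity
      rw [hRatio v hv0 z hz]
      have hcup : cfun (v/z) / cfun v ≤ 3 := by
        have h1 := (hAc (v/z) (le_trans hB₀A hvz)).2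
        have h2 := (hAc v (le_trans hB₀A hv)).1
        rw [div_le_iff₀ (hcpos v hv0)]
        linarith
      have hcnn : 0 ≤ cfun (v/z) / cfun v :=
        le_of_lt (div_pos (hcpos _ hvz0) (hcpos _ hv0))
      have hIcase := hIbnd v (v/z) hv hvz
      have hlogd : Real.log (v/z) - Real.log v = -Real.log z := by
        rw [Real.log_div (ne_of_gt hv0) (ne_of_gt hz)]; ring
      rw [hlogd, abs_neg] at hIcase
      have hexpb : Real.exp (I (v/z) - I v) ≤ z ^ δ + z ^ (-δ) := by
        have h1 : I (v/z) - I v ≤ δ * |Real.log z| := le_trans (le_abs_self _) hIcase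
        rcases le_total 1 z with hz1 | hz1
        · have : |Real.log z| = Real.log z := abs_of_nonneg (Real.log_nonneg hz1)
          rw [this] at h1
          have : Real.exp (I (v/z) - I v) ≤ Real.exp (δ * Real.log z) := Real.exp_le_exp.mpr h1
          calc Real.exp (I (v/z) - I v) ≤ Real.exp (δ * Real.log z) := this
            _ = z ^ δ := by rw [Real.rpow_def_of_pos hz]; ring_nf
            _ ≤ z ^ δ + z ^ (-δ) := le_add_of_nonneg_right (Real.rpow_pos_of_pos hz _).le
        · have : |Real.log z| = -Real.log z := abs_of_nonpos (Real.log_nonpos hz.le hz1)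
          rw [this] at h1
          have h2 : Real.exp (I (v/z) - I v) ≤ Real.exp (δ * (-Real.log z)) :=
            Real.exp_le_exp.mpr h1
          calc Real.exp (I (v/z) - I v) ≤ Real.exp (δ * (-Real.log z)) := h2
            _ = z ^ (-δ) := by rw [Real.rpow_def_of_pos hz]; ring_nf
            _ ≤ z ^ δ + z ^ (-δ) := le_add_of_nonneg_left (Real.rpow_pos_of_pos hz _).le
      have hzα : (0:ℝ) < z ^ α := Real.rpow_pos_of_pos hz α
      have step1 : z ^ α * (cfun (v/z) / cfun v) * Real.exp (I (v/z) - I v)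
          ≤ z ^ α * 3 * (z ^ δ + z ^ (-δ)) := by
        have e1 : z ^ α * (cfun (v/z) / cfun v) ≤ z ^ α * 3 :=
          mul_le_mul_of_nonneg_left hcup hzα.le
        have e2 : (0:ℝ) ≤ z ^ α * (cfun (v/z) / cfun v) := mul_nonneg hzα.le hcnn
        exact mul_le_mul e1 hexpb (Real.exp_pos _).le (by positivity)
      have step2 : z ^ α * 3 * (z ^ δ + z ^ (-δ)) = 3 * (z ^ (α - δ) + z ^ (α + δ)) := by
        rw [show α - δ = α + (-δ) by ring, Real.rpow_add hz, Real.rpow_add hz]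
        ring
      calc z ^ α * (cfun (v/z) / cfun v) * Real.exp (I (v/z) - I v)
          ≤ z ^ α * 3 * (z ^ δ + z ^ (-δ)) := step1
        _ = 3 * (z ^ (α - δ) + z ^ (α + δ)) := step2
        _ ≤ C * (z ^ (α - δ) + z ^ (α + δ)) := mul_le_mul_of_nonneg_right hC3 hsum0
    · -- tail region
      push_neg at hzc
      have hGp : 0 < G (1/v) := hGpos _ (by positivity)
      have hr1 : G (z/v) / G (1/v) ≤ 1 / G (1/v) := by
        gcongr
        exact hGle1 _
      have hpos2 : 0 < c₂ * v ^ (-(α+δ)) := by positivity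
      have hr2 : 1 / G (1/v) ≤ 1 / (c₂ * v ^ (-(α+δ))) :=
        one_div_le_one_div_of_le hpos2 (hGlb v hv)
      have heq2 : 1 / (c₂ * v ^ (-(α+δ))) = v ^ (α+δ) / c₂ := by
        rw [Real.rpow_neg hv0.le]
        field_simp
      have hvb : v ^ (α+δ) ≤ B₀ ^ (α+δ) * z ^ (α+δ) := by
        rw [← Real.mul_rpow hB₀0.le hz.le]
        exact Real.rpow_le_rpow hv0.le hzc.le (by positivity)
      have hfin : G (z/v) / G (1/v) ≤ (B₀ ^ (α+δ) / c₂) * z ^ (α+δ) := by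
        calc G (z/v)/G (1/v) ≤ 1 / G (1/v) := hr1
          _ ≤ v ^ (α+δ)/c₂ := by rw [← heq2]; exact hr2
          _ ≤ (B₀ ^ (α+δ) * z ^ (α+δ))/c₂ := by gcongr
          _ = (B₀ ^ (α+δ)/c₂) * z ^ (α+δ) := by ring
      calc G (z/v)/G (1/v) ≤ (B₀ ^ (α+δ)/c₂) * z ^ (α+δ) := hfin
        _ ≤ C * z ^ (α+δ) := mul_le_mul_of_nonneg_right (le_max_right _ _)
            (Real.rpow_pos_of_pos hz _).le
        _ ≤ C * (z ^ (α-δ) + z ^ (α+δ)) := mul_le_mul_of_nonneg_left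
            (le_add_of_nonneg_left (Real.rpow_pos_of_pos hz _).le) hC0
  have hPointwise : ∀ z : ℝ, 0 < z →
      Tendsto (fun n => G (z / u n) / G (1 / u n)) atTop (nhds (z ^ α)) := by
    intro z hz
    have huz : Tendsto (fun n => u n / z) atTop atTop := hu.atTop_div_const hz
    have hcpart : Tendsto (fun n => cfun (u n / z) / cfun (u n)) atTop (nhds 1) := by
      have h1 : Tendsto (fun n => cfun (u n / z)) atTop (nhds c) := hcfun.comp huz
      have h2 : Tendsto (fun n => cfun (u n)) atTop (nhds c) := hcfun.comp hu
      have h3 := h1.div h2 (ne_of_gt hc)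
      simpa [div_self (ne_of_gt hc), Pi.div_def] using h3
    have hD : Tendsto (fun n => I (u n / z) - I (u n)) atTop (nhds 0) := by
      rw [NormedAddCommGroup.tendsto_nhds_zero]
      intro ε hε
      set δ' : ℝ := ε / (2 * (|Real.log z| + 1)) with hδ'def
      have hδ' : 0 < δ' := by positivity
      obtain ⟨B', hB'1, hB'⟩ := stmt12_Ilim εfun hεfun δ' hδ'
      filter_upwards [hu.eventually_ge_atTop (max B' (B' * z))] with n hn
      have h1 : B' ≤ u n := le_trans (le_max_left _ _) hn
      have h2 : B' ≤ u n / z := (le_div_iff₀ hz).mpr (le_trans (le_max_right _ _) hn)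
      have hun0 : 0 < u n := lt_of_lt_of_le (lt_of_lt_of_le one_pos hB'1) h1
      have hlog : Real.log (u n / z) = Real.log (u n) - Real.log z :=
        Real.log_div (ne_of_gt hun0) (ne_of_gt hz)
      have key : |I (u n / z) - I (u n)| ≤ δ' * |Real.log z| := by
        rcases le_total (u n / z) (u n) with hcmp | hcmp
        · have h := hB' (u n / z) (u n) h2 hcmp
          rw [abs_sub_comm]
          calc |I (u n) - I (u n / z)| ≤ δ' * (Real.log (u n) - Real.log (u n / z)) := h
            _ = δ' * Real.log z := by rw [hlog]; ring
            _ ≤ δ' * |Real.log z| := mul_le_mul_of_nonneg_left (le_abs_self _) hδ'.le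
        · have h := hB' (u n) (u n / z) h1 hcmp
          calc |I (u n / z) - I (u n)| ≤ δ' * (Real.log (u n / z) - Real.log (u n)) := h
            _ = δ' * (-Real.log z) := by rw [hlog]; ring
            _ ≤ δ' * |Real.log z| := mul_le_mul_of_nonneg_left (neg_le_abs _) hδ'.le
      have hfin : δ' * |Real.log z| < ε := by
        rw [hδ'def, div_mul_eq_mul_div, div_lt_iff₀ (by positivity)]
        nlinarith [abs_nonneg (Real.log z)]
      calc ‖I (u n / z) - I (u n)‖ = |I (u n / z) - I (u n)| := rfl
        _ ≤ δ' * |Real.log z| := key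
        _ < ε := hfin
    have hepart : Tendsto (fun n => Real.exp (I (u n / z) - I (u n))) atTop (nhds 1) := by
      have h := (Real.continuous_exp.tendsto 0).comp hD
      simpa [Function.comp_def] using h
    have hlim : Tendsto (fun n => z ^ α * (cfun (u n / z) / cfun (u n))
        * Real.exp (I (u n / z) - I (u n))) atTop (nhds (z ^ α)) := by
      have h := ((tendsto_const_nhds (x := z ^ α) (f := atTop)).mul hcpart).mul hepart
      simpa using h
    have hform : (fun n => z ^ α * (cfun (u n / z) / cfun (u n))
        * Real.exp (I (u n / z) - I (u n)))
        =ᶠ[atTop] (fun n => G (z / u n) / G (1 / u n)) := by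
      filter_upwards [hu.eventually_gt_atTop 0] with n hn
      exact (hRatio (u n) hn z hz).symm
    exact hlim.congr' hform
  have hbint : Integrable
      (fun z => C * (Real.exp (-z) * z ^ (α - δ) + Real.exp (-z) * z ^ (α + δ)))
      (volume.restrict (Set.Ioi (0:ℝ))) := by
    have h1 : (-1:ℝ) < α - δ := by rw [hδdef]; linarith
    have h2 : (-1:ℝ) < α + δ := by rw [hδdef]; linarith
    exact ((stmt12_gamma_int _ h1).add (stmt12_gamma_int _ h2)).const_mul C
  have hDCT : Tendsto (fun n => ∫ z in Set.Ioi (0:ℝ),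
      Real.exp (-z) * (G (z / u n) / G (1 / u n))) atTop (nhds (Real.Gamma (1 + α))) := by
    rw [← stmt12_gamma_val α hα]
    apply tendsto_integral_filter_of_dominated_convergence
      (fun z => C * (Real.exp (-z) * z ^ (α - δ) + Real.exp (-z) * z ^ (α + δ)))
    · apply Eventually.of_forall
      intro n
      apply Measurable.aestronglyMeasurable
      exact (Real.continuous_exp.measurable.comp measurable_neg).mul
        ((hGmeas.comp (measurable_id.div_const (u n))).div_const _)
    · filter_upwards [hu.eventually_ge_atTop B₀] with n hn
      rw [ae_restrict_iff' measurableSet_Ioi]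
      apply ae_of_all
      intro z hz
      have hz0 : (0:ℝ) < z := hz
      have hnn : 0 ≤ Real.exp (-z) * (G (z / u n) / G (1 / u n)) :=
        mul_nonneg (Real.exp_pos _).le (div_nonneg (hGnn _) (hGnn _))
      rw [Real.norm_eq_abs, abs_of_nonneg hnn]
      have hup := hUpper (u n) hn z hz0
      calc Real.exp (-z) * (G (z / u n) / G (1 / u n))
          ≤ Real.exp (-z) * (C * (z ^ (α - δ) + z ^ (α + δ))) :=
            mul_le_mul_of_nonneg_left hup (Real.exp_pos _).le
        _ = C * (Real.exp (-z) * z ^ (α - δ) + Real.exp (-z) * z ^ (α + δ)) := by ring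
    · exact hbint
    · rw [ae_restrict_iff' measurableSet_Ioi]
      apply ae_of_all
      intro z hz
      exact tendsto_const_nhds.mul (hPointwise z hz)
  have hΓpos : 0 < Real.Gamma (1 + α) := Real.Gamma_pos_of_pos (by linarith)
  have hfinal := hDCT.div_const (Real.Gamma (1 + α))
  rw [div_self (ne_of_gt hΓpos)] at hfinal
  apply hfinal.congr'
  filter_upwards [hu.eventually_ge_atTop (max B₀ 1)] with n hn
  have hun : 0 < u n := lt_of_lt_of_le one_pos (le_trans (le_max_right _ _) hn)
  have hE := stmt12_fubini ξ hξ hle G hGprob (u n) hun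
  have hGposn : 0 < G (1 / u n) := hGpos _ (by positivity)
  have hpull : ∫ z in Set.Ioi (0:ℝ), Real.exp (-z) * (G (z / u n) / G (1 / u n))
      = (∫ z in Set.Ioi (0:ℝ), Real.exp (-z) * G (z / u n)) / G (1 / u n) := by
    simp_rw [← mul_div_assoc]
    rw [integral_div]
  show (∫ z in Set.Ioi (0:ℝ), Real.exp (-z) * (G (z / u n) / G (1 / u n)))
        / Real.Gamma (1 + α)
      = (∫ ω, Real.exp (u n * ξ ω) ∂ℙ) / ((1 - F (-(1 / u n))) * Real.Gamma (1 + α))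
  rw [hpull, ← hE, div_div]
end

section
/- Under the same hypotheses (ξ with right endpoint 0, 1−F(−x) α-regularly varying at 0, u_N → ∞), E[u_N ξ e^{u_N ξ}] ~ (1 − F(−1/u_N)) (Γ(1+α) − Γ(α+2)) as N → ∞. -/
open MeasureTheory ProbabilityTheory Filter

namespace Stmt13Aux
open Set

noncomputable def W (s : ℝ) : ℝ := Real.exp (-s) * (s - 1)

lemma W_cont : Continuous W := by unfold W; fun_prop

lemma ftc_W (t : ℝ) : ∫ s in (0:ℝ)..t, W s = -t * Real.exp (-t) := by
  have h : ∀ x ∈ Set.uIcc (0:ℝ) t, HasDerivAt (fun s => -s * Real.exp (-s)) (W x) x := by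
    intro x _
    have h1 : HasDerivAt (fun s : ℝ => -s) (-1) x := (hasDerivAt_id x).neg
    have h2 : HasDerivAt (fun s : ℝ => Real.exp (-s)) (Real.exp (-x) * (-1)) x := h1.exp
    have h3 := h1.mul h2
    exact h3.congr_deriv (by unfold W; ring)
  have := intervalIntegral.integral_eq_sub_of_hasDerivAt h (W_cont.intervalIntegrable 0 t)
  simpa using this

lemma W_integrable : IntegrableOn W (Set.Ioi (0:ℝ)) := by
  have h1 := Real.GammaIntegral_convergent (by norm_num : (0:ℝ) < 1)
  have h2 := Real.GammaIntegral_convergent (by norm_num : (0:ℝ) < 2)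
  apply (h2.sub h1).congr
  filter_upwards with x
  unfold W
  norm_num [Real.rpow_one]
  ring

lemma integral_W : ∫ s in Set.Ioi (0:ℝ), W s = 0 := by
  have h1 := Real.GammaIntegral_convergent (by norm_num : (0:ℝ) < 1)
  have h2 := Real.GammaIntegral_convergent (by norm_num : (0:ℝ) < 2)
  have : ∫ s in Set.Ioi (0:ℝ), W s
      = (∫ s in Set.Ioi (0:ℝ), Real.exp (-s) * s ^ ((2:ℝ)-1)) -
        ∫ s in Set.Ioi (0:ℝ), Real.exp (-s) * s ^ ((1:ℝ)-1) := by
    rw [← integral_sub h2 h1]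
    apply integral_congr_ae
    filter_upwards with x
    unfold W
    norm_num [Real.rpow_one]
    ring
  rw [this, ← Real.Gamma_eq_integral (by norm_num : (0:ℝ) < 2),
    ← Real.Gamma_eq_integral (by norm_num : (0:ℝ) < 1)]
  have : Real.Gamma 2 = 1 := by
    rw [show (2:ℝ) = 1 + 1 by norm_num, Real.Gamma_add_one (by norm_num), Real.Gamma_one]; norm_num
  rw [this, Real.Gamma_one]; norm_num

lemma integral_indicator_W (t : ℝ) (ht : 0 ≤ t) :
    ∫ s in Set.Ioi (0:ℝ), (Set.Iic t).indicator W s = -t * Real.exp (-t) := by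
  rw [MeasureTheory.integral_indicator measurableSet_Iic]
  rw [Measure.restrict_restrict measurableSet_Iic]
  rw [show Set.Iic t ∩ Set.Ioi 0 = Set.Ioc 0 t by rw [Set.inter_comm, Set.Ioi_inter_Iic]]
  rw [← intervalIntegral.integral_of_le ht, ftc_W]


lemma lemA (εfun : ℝ → ℝ) (hεfun : Tendsto εfun atTop (nhds 0)) (δ : ℝ) (hδ : 0 < δ) :
    ∃ T : ℝ, 1 ≤ T ∧ ∀ a b : ℝ, T ≤ a → a ≤ b →
      |(∫ t in (1:ℝ)..b, εfun t / t) - ∫ t in (1:ℝ)..a, εfun t / t|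
        ≤ δ * (Real.log b - Real.log a) := by
  by_cases hint : ∀ y : ℝ, 1 ≤ y → IntervalIntegrable (fun t => εfun t / t) volume 1 y
  · have hev : ∀ᶠ t in atTop, |εfun t| ≤ δ := by
      have := Metric.tendsto_nhds.mp hεfun δ hδ
      filter_upwards [this] with t ht
      rw [Real.dist_eq, sub_zero] at ht
      exact ht.le
    obtain ⟨T0, hT0⟩ := eventually_atTop.mp hev
    refine ⟨max T0 1, le_max_right _ _, fun a b ha hab => ?_⟩
    have ha1 : (1:ℝ) ≤ a := le_trans (le_max_right _ _) ha
    have haT : T0 ≤ a := le_trans (le_max_left _ _) ha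
    have hb1 : (1:ℝ) ≤ b := ha1.trans hab
    have ha0 : (0:ℝ) < a := lt_of_lt_of_le one_pos ha1
    have hab' : IntervalIntegrable (fun t => εfun t / t) volume a b := by
      refine (hint b hb1).mono_set ?_
      rw [Set.uIcc_of_le hab, Set.uIcc_of_le hb1]
      exact Set.Icc_subset_Icc ha1 le_rfl
    rw [intervalIntegral.integral_interval_sub_left (hint b hb1) (hint a ha1)]
    have h1 : |∫ t in a..b, εfun t / t| ≤ ∫ t in a..b, |εfun t / t| :=
      intervalIntegral.abs_integral_le_integral_abs hab
    have hd : IntervalIntegrable (fun t => δ / t) volume a b := by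
      apply ContinuousOn.intervalIntegrable
      apply ContinuousOn.div continuousOn_const continuousOn_id
      intro x hx
      rw [Set.uIcc_of_le hab] at hx
      exact ne_of_gt (lt_of_lt_of_le ha0 hx.1)
    have h2 : ∫ t in a..b, |εfun t / t| ≤ ∫ t in a..b, δ / t := by
      refine intervalIntegral.integral_mono_on hab hab'.abs hd (fun x hx => ?_)
      have hx0 : 0 < x := lt_of_lt_of_le ha0 hx.1
      rw [abs_div, abs_of_pos hx0]
      gcongr
      exact hT0 x (haT.trans hx.1)
    have h3 : ∫ t in a..b, δ / t = δ * (Real.log b - Real.log a) := by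
      have : ∀ t : ℝ, δ / t = δ * t⁻¹ := fun t => div_eq_mul_inv δ t
      simp_rw [this]
      rw [intervalIntegral.integral_const_mul, integral_inv_of_pos ha0 (ha0.trans_le hab),
        Real.log_div (by positivity) (by positivity)]
    linarith
  · push_neg at hint
    obtain ⟨y₀, hy₀1, hy₀⟩ := hint
    refine ⟨y₀, hy₀1, fun a b ha hab => ?_⟩
    have hb : y₀ ≤ b := ha.trans hab
    have hna : ¬ IntervalIntegrable (fun t => εfun t / t) volume 1 a := fun h =>
      hy₀ (h.mono_set (by rw [Set.uIcc_of_le hy₀1, Set.uIcc_of_le (hy₀1.trans ha)]; exact Set.Icc_subset_Icc le_rfl ha))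
    have hnb : ¬ IntervalIntegrable (fun t => εfun t / t) volume 1 b := fun h =>
      hy₀ (h.mono_set (by rw [Set.uIcc_of_le hy₀1, Set.uIcc_of_le (hy₀1.trans hb)]; exact Set.Icc_subset_Icc le_rfl hb))
    rw [intervalIntegral.integral_undef hna, intervalIntegral.integral_undef hnb]
    simp only [sub_zero, abs_zero]
    have h0 : 0 < a := lt_of_lt_of_le one_pos (hy₀1.trans ha)
    have := Real.log_le_log h0 hab
    exact mul_nonneg hδ.le (by linarith)

lemma rep {Ω : Type*} [MeasureSpace Ω] [IsProbabilityMeasure (ℙ : Measure Ω)]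
    (ξ : Ω → ℝ) (hξ : Measurable ξ) (hle : ∀ᵐ ω ∂ℙ, ξ ω ≤ 0)
    (F : ℝ → ℝ) (hF : ∀ x : ℝ, F x = (ℙ {ω | ξ ω ≤ x}).toReal) (hFm : Measurable F)
    (u : ℝ) (hu : 0 < u) :
    ∫ ω, u * ξ ω * Real.exp (u * ξ ω) ∂ℙ
      = ∫ s in Set.Ioi (0:ℝ), Real.exp (-s) * (1 - s) * (1 - F (-(s/u))) := by
  have hF01 : ∀ x, 0 ≤ F x ∧ F x ≤ 1 := by
    intro x
    rw [hF x]
    exact ⟨ENNReal.toReal_nonneg, by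
      have := prob_le_one (μ := (ℙ : Measure Ω)) (s := {ω | ξ ω ≤ x})
      exact ENNReal.toReal_le_of_le_ofReal one_pos.le (by simpa using this)⟩
  set S : Set (Ω × ℝ) := {q : Ω × ℝ | ξ q.1 ≤ -(q.2 / u)} with hS
  have hSm : MeasurableSet S := by
    have h1 : Measurable (fun q : Ω × ℝ => ξ q.1) := hξ.comp measurable_fst
    have h2 : Measurable (fun q : Ω × ℝ => -(q.2 / u)) := by fun_prop
    exact measurableSet_le h1 h2
  set H : Ω × ℝ → ℝ := S.indicator (fun q => W q.2) with hH
  have hbase : Integrable (fun q : Ω × ℝ => W q.2) ((ℙ : Measure Ω).prod (volume.restrict (Set.Ioi 0))) := by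
    have := (integrable_const (μ := (ℙ : Measure Ω)) (1:ℝ)).mul_prod W_integrable
    simpa using this
  have hHint : Integrable H ((ℙ : Measure Ω).prod (volume.restrict (Set.Ioi 0))) := hbase.indicator hSm
  have hswap := MeasureTheory.integral_integral_swap (f := fun ω s => H (ω, s))
    (μ := (ℙ : Measure Ω)) (ν := volume.restrict (Set.Ioi 0)) hHint
  calc ∫ ω, u * ξ ω * Real.exp (u * ξ ω) ∂ℙ
      = ∫ ω, (∫ s in Set.Ioi (0:ℝ), H (ω, s)) ∂ℙ := by
        refine integral_congr_ae ?_
        filter_upwards [hle] with ω hω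
        have hfun : (fun s => H (ω, s)) = (Set.Iic (-(u * ξ ω))).indicator W := by
          funext s
          have hiff : (ξ ω ≤ -(s / u)) ↔ (s ≤ -(u * ξ ω)) := by
            rw [show -(s/u) = (-s)/u by ring, le_div_iff₀ hu]
            constructor <;> intro h <;> nlinarith [mul_comm (ξ ω) u]
          simp only [hH, hS, Set.indicator_apply, Set.mem_setOf_eq, Set.mem_Iic, hiff]
        rw [hfun, integral_indicator_W _ (by nlinarith : 0 ≤ -(u * ξ ω))]
        simp
    _ = ∫ s in Set.Ioi (0:ℝ), (∫ ω, H (ω, s) ∂ℙ) := hswap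
    _ = ∫ s in Set.Ioi (0:ℝ), W s * F (-(s/u)) := by
        refine setIntegral_congr_fun measurableSet_Ioi (fun s hs => ?_)
        have hfun : (fun ω => H (ω, s)) = ({ω | ξ ω ≤ -(s/u)}).indicator (fun _ => W s) := by
          funext ω; simp [hH, hS, Set.indicator_apply]
        rw [hfun, integral_indicator_const _ (show MeasurableSet {ω | ξ ω ≤ -(s/u)} from hξ measurableSet_Iic), hF, smul_eq_mul, mul_comm]; rfl
    _ = ∫ s in Set.Ioi (0:ℝ), Real.exp (-s) * (1 - s) * (1 - F (-(s/u))) := by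
        have hFint : IntegrableOn (fun s => W s * F (-(s/u))) (Set.Ioi 0) := by
          refine Integrable.mono' W_integrable.abs ?_ ?_
          · exact (W_cont.measurable.mul
              (hFm.comp ((measurable_id.div_const u).neg))).aestronglyMeasurable
          · filter_upwards with s
            rw [norm_mul, Real.norm_eq_abs, Real.norm_eq_abs, abs_of_nonneg (hF01 _).1]
            exact mul_le_of_le_one_right (abs_nonneg _) (hF01 _).2
        have hkey : ∀ s : ℝ, Real.exp (-s) * (1 - s) * (1 - F (-(s/u)))
            = W s * F (-(s/u)) - W s := by
          intro s; unfold W; ring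
        rw [show (fun s => Real.exp (-s) * (1 - s) * (1 - F (-(s/u))))
            = fun s => W s * F (-(s/u)) - W s from funext hkey]
        rw [integral_sub hFint W_integrable, integral_W, sub_zero]


set_option maxHeartbeats 2000000 in
lemma key (α : ℝ) (hα : 0 < α) (c : ℝ) (hc : 0 < c) (cfun εfun : ℝ → ℝ)
    (hcfun : Tendsto cfun atTop (nhds c)) (hεfun : Tendsto εfun atTop (nhds 0))
    (G : ℝ → ℝ) (hGm : Measurable G)
    (hGpos : ∀ x : ℝ, 0 < x → 0 < G x) (hGle : ∀ x : ℝ, 0 < x → G x ≤ 1)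
    (hrepG : ∀ x : ℝ, 0 < x →
      G x = x ^ α * cfun (1/x) * Real.exp (∫ t in (1:ℝ)..(1/x), εfun t / t))
    (u : ℕ → ℝ) (hu : Tendsto u atTop atTop) :
    Tendsto (fun n => ∫ s in Set.Ioi (0:ℝ),
        Real.exp (-s) * (1 - s) * (G (s / u n) / G (1 / u n)))
      atTop (nhds (Real.Gamma (α + 1) - Real.Gamma (α + 2))) := by
  set I : ℝ → ℝ := fun y => ∫ t in (1:ℝ)..y, εfun t / t with hIdef
  obtain ⟨Tc, hTc⟩ : ∃ Tc : ℝ, ∀ t, Tc ≤ t → c/2 ≤ cfun t ∧ cfun t ≤ 2*c := by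
    have h := Metric.tendsto_nhds.mp hcfun (c/2) (by positivity)
    obtain ⟨Tc, h⟩ := eventually_atTop.mp h
    refine ⟨Tc, fun t ht => ?_⟩
    have h2 := h t ht
    rw [Real.dist_eq] at h2
    have h3 := abs_lt.mp h2
    constructor <;> [linarith [h3.1]; linarith [h3.2]]
  set δ₀ : ℝ := α/2 with hδ₀def
  have hδ₀ : 0 < δ₀ := by positivity
  clear_value δ₀
  obtain ⟨TA, hTA1, hTA⟩ := lemA εfun hεfun δ₀ hδ₀
  set T₁ : ℝ := max (max TA Tc) 1 with hT₁def
  have hT₁1 : (1:ℝ) ≤ T₁ := le_max_right _ _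
  have hT₁A : TA ≤ T₁ := le_trans (le_max_left _ _) (le_max_left _ _)
  have hT₁c : Tc ≤ T₁ := le_trans (le_max_right _ _) (le_max_left _ _)
  have hT₁pos : (0:ℝ) < T₁ := lt_of_lt_of_le one_pos hT₁1
  clear_value T₁
  -- ratio formula
  have ratio_eq : ∀ v s : ℝ, 0 < v → 0 < s → cfun v ≠ 0 →
      G (s / v) / G (1 / v)
        = s ^ α * (cfun (v / s) / cfun v) * Real.exp (I (v/s) - I v) := by
    intro v s hv hs hcv
    rw [hrepG (s/v) (by positivity), hrepG (1/v) (by positivity), one_div_one_div, one_div_div]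
    have h1 : (s/v) ^ α = s ^ α * (1/v) ^ α := by
      rw [show s/v = s * (1/v) by ring, Real.mul_rpow hs.le (by positivity)]
    rw [h1, Real.exp_sub]
    have h2 : (0:ℝ) < (1/v) ^ α := Real.rpow_pos_of_pos (by positivity) α
    field_simp
    ring
  -- Potter-type upper bound
  have hPotter : ∀ v s : ℝ, T₁ ≤ v → 0 < s → T₁ ≤ v / s →
      G (s / v) / G (1 / v) ≤ 4 * (s ^ (α - δ₀) + s ^ (α + δ₀)) := by
    intro v s hv hs hvs
    have hv0 : 0 < v := lt_of_lt_of_le hT₁pos hv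
    have hcv := hTc v (le_trans hT₁c hv)
    have hcvs := hTc (v/s) (le_trans hT₁c hvs)
    have hcv0 : (0:ℝ) < cfun v := lt_of_lt_of_le (by positivity) hcv.1
    rw [ratio_eq v s hv0 hs (ne_of_gt hcv0)]
    have hf2 : cfun (v/s) / cfun v ≤ 4 := by
      rw [div_le_iff₀ hcv0]; linarith [hcvs.2, hcv.1]
    have hf2pos : 0 < cfun (v/s) / cfun v :=
      div_pos (lt_of_lt_of_le (by positivity) hcvs.1) hcv0
    have hexp : Real.exp (I (v/s) - I v) ≤ s ^ (-δ₀) + s ^ δ₀ := by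
      rcases le_total s 1 with hs1 | hs1
      · have hge : v ≤ v / s := by rw [le_div_iff₀ hs]; nlinarith
        have h := hTA v (v/s) (hT₁A.trans hv) hge
        have h2 : I (v/s) - I v ≤ δ₀ * (Real.log (v/s) - Real.log v) := (abs_le.mp h).2
        have hlog : Real.log (v/s) - Real.log v = - Real.log s := by
          rw [Real.log_div (ne_of_gt hv0) (ne_of_gt hs)]; ring
        have h3 : Real.exp (I (v/s) - I v) ≤ Real.exp (δ₀ * (- Real.log s)) := by
          apply Real.exp_le_exp.mpr; rw [← hlog]; exact h2
        have h4 : Real.exp (δ₀ * (- Real.log s)) = s ^ (-δ₀) := by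
          rw [Real.rpow_def_of_pos hs]; ring_nf
        calc Real.exp (I (v/s) - I v) ≤ s ^ (-δ₀) := by rw [← h4]; exact h3
          _ ≤ s ^ (-δ₀) + s ^ δ₀ := le_add_of_nonneg_right (Real.rpow_nonneg hs.le _)
      · have hge : v / s ≤ v := by rw [div_le_iff₀ hs]; nlinarith
        have h := hTA (v/s) v (hT₁A.trans hvs) hge
        have h2 : I v - I (v/s) ≤ δ₀ * (Real.log v - Real.log (v/s)) := (abs_le.mp h).2
        have h2' : -(δ₀ * (Real.log v - Real.log (v/s))) ≤ I v - I (v/s) := (abs_le.mp h).1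
        have hlog : Real.log v - Real.log (v/s) = Real.log s := by
          rw [Real.log_div (ne_of_gt hv0) (ne_of_gt hs)]; ring
        have h3 : Real.exp (I (v/s) - I v) ≤ Real.exp (δ₀ * Real.log s) := by
          apply Real.exp_le_exp.mpr; rw [hlog] at h2'; linarith
        have h4 : Real.exp (δ₀ * Real.log s) = s ^ δ₀ := by
          rw [Real.rpow_def_of_pos hs]; ring_nf
        calc Real.exp (I (v/s) - I v) ≤ s ^ δ₀ := by rw [← h4]; exact h3
          _ ≤ s ^ (-δ₀) + s ^ δ₀ := le_add_of_nonneg_left (Real.rpow_nonneg hs.le _)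
    have e1 : s ^ α * s ^ (-δ₀) = s ^ (α - δ₀) := by
      rw [← Real.rpow_add hs]; ring_nf
    have e2 : s ^ α * s ^ δ₀ = s ^ (α + δ₀) := by
      rw [← Real.rpow_add hs]
    have hsα : (0:ℝ) ≤ s ^ α := Real.rpow_nonneg hs.le α
    calc s ^ α * (cfun (v/s) / cfun v) * Real.exp (I (v/s) - I v)
        ≤ s ^ α * 4 * (s ^ (-δ₀) + s ^ δ₀) := by
          apply mul_le_mul (mul_le_mul le_rfl hf2 hf2pos.le hsα) hexp (Real.exp_pos _).le
          positivity
      _ = 4 * (s ^ α * s ^ (-δ₀)) + 4 * (s ^ α * s ^ δ₀) := by ring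
      _ = 4 * (s ^ (α - δ₀) + s ^ (α + δ₀)) := by rw [e1, e2]; ring
  -- lower bound on G (1/v)
  set C₀ : ℝ := (c/2) * Real.exp (I T₁) * T₁ ^ δ₀ with hC₀def
  have hC₀pos : 0 < C₀ := by positivity
  clear_value C₀
  have hginv : ∀ v : ℝ, T₁ ≤ v → 1 / G (1/v) ≤ (1/C₀) * v ^ (α + δ₀) := by
    intro v hv
    have hv0 : 0 < v := lt_of_lt_of_le hT₁pos hv
    have hGp : 0 < G (1/v) := hGpos _ (by positivity)
    have hkey : C₀ * v ^ (-(α+δ₀)) ≤ G (1/v) := by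
      rw [hrepG (1/v) (by positivity), one_div_one_div]
      have hIv : I T₁ - δ₀ * (Real.log v - Real.log T₁) ≤ I v := by
        have h := hTA T₁ v hT₁A hv
        have := (abs_le.mp h).1
        linarith
      have hexp : Real.exp (I T₁) * T₁ ^ δ₀ * v ^ (-δ₀) ≤ Real.exp (I v) := by
        have heq : Real.exp (I T₁) * T₁ ^ δ₀ * v ^ (-δ₀)
            = Real.exp (I T₁ - δ₀ * (Real.log v - Real.log T₁)) := by
          rw [Real.rpow_def_of_pos hT₁pos, Real.rpow_def_of_pos hv0, ← Real.exp_add, ← Real.exp_add]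
          ring_nf
        rw [heq]
        exact Real.exp_le_exp.mpr hIv
      have h1vα : (1/v) ^ α = v ^ (-α) := by
        rw [one_div, Real.inv_rpow hv0.le, ← Real.rpow_neg hv0.le]
      have hcv := hTc v (hT₁c.trans hv)
      calc C₀ * v ^ (-(α+δ₀))
          = (1/v) ^ α * ((c/2) * (Real.exp (I T₁) * T₁ ^ δ₀ * v ^ (-δ₀))) := by
            rw [h1vα, show -(α+δ₀) = -α + -δ₀ by ring, Real.rpow_add hv0, hC₀def]; ring
        _ ≤ (1/v) ^ α * (cfun v * Real.exp (I v)) := by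
            apply mul_le_mul_of_nonneg_left ?_ (Real.rpow_nonneg (by positivity) α)
            apply mul_le_mul hcv.1 hexp (by positivity) (by linarith [hcv.1])
        _ = (1/v) ^ α * cfun v * Real.exp (I v) := by ring
    have h2 := one_div_le_one_div_of_le (by positivity) hkey
    calc 1 / G (1/v) ≤ 1 / (C₀ * v ^ (-(α+δ₀))) := h2
      _ = (1/C₀) * v ^ (α + δ₀) := by
          rw [Real.rpow_neg hv0.le, one_div, mul_inv, inv_inv, one_div]
  -- pointwise convergence of the ratio
  have hpt : ∀ s : ℝ, 0 < s →
      Tendsto (fun n => G (s / u n) / G (1 / u n)) atTop (nhds (s ^ α)) := by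
    intro s hs
    have huds : Tendsto (fun n => u n / s) atTop atTop := hu.atTop_div_const hs
    have hf2 : Tendsto (fun n => cfun (u n / s) / cfun (u n)) atTop (nhds 1) := by
      have h1 := hcfun.comp huds
      have h2 := hcfun.comp hu
      have h3 := h1.div h2 (ne_of_gt hc)
      simpa [div_self (ne_of_gt hc), Pi.div_def, Function.comp_def] using h3
    have hdiff : Tendsto (fun n => I (u n / s) - I (u n)) atTop (nhds 0) := by
      rw [Metric.tendsto_atTop]
      intro ε hε
      have hL : (0:ℝ) ≤ |Real.log s| := abs_nonneg _
      set δ' : ℝ := ε / (|Real.log s| + 1) with hδ'def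
      have hδ' : 0 < δ' := by positivity
      obtain ⟨T', hT'1, hT'⟩ := lemA εfun hεfun δ' hδ'
      obtain ⟨N1, hN1⟩ := eventually_atTop.mp (hu.eventually_ge_atTop T')
      obtain ⟨N2, hN2⟩ := eventually_atTop.mp (hu.eventually_ge_atTop (T' * s))
      refine ⟨max N1 N2, fun n hn => ?_⟩
      have h1 := hN1 n (le_trans (le_max_left _ _) hn)
      have h2 := hN2 n (le_trans (le_max_right _ _) hn)
      have hun0 : 0 < u n := lt_of_lt_of_le (lt_of_lt_of_le one_pos hT'1) h1
      have hkey : |I (u n / s) - I (u n)| ≤ δ' * |Real.log s| := by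
        rcases le_total s 1 with hs1 | hs1
        · have hge : u n ≤ u n / s := by rw [le_div_iff₀ hs]; nlinarith
          have h := hT' (u n) (u n / s) h1 hge
          have hlog : Real.log (u n / s) - Real.log (u n) = |Real.log s| := by
            rw [Real.log_div (ne_of_gt hun0) (ne_of_gt hs),
              abs_of_nonpos (Real.log_nonpos hs.le hs1)]
            ring
          rw [hlog] at h
          exact h
        · have hge : u n / s ≤ u n := by rw [div_le_iff₀ hs]; nlinarith
          have hT's : T' ≤ u n / s := by rw [le_div_iff₀ hs]; linarith
          have h := hT' (u n / s) (u n) hT's hge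
          have hlog : Real.log (u n) - Real.log (u n / s) = |Real.log s| := by
            rw [Real.log_div (ne_of_gt hun0) (ne_of_gt hs),
              abs_of_nonneg (Real.log_nonneg hs1)]
            ring
          rw [hlog, abs_sub_comm] at h
          exact h
      have hlt : δ' * |Real.log s| < ε := by
        rw [hδ'def, div_mul_eq_mul_div, div_lt_iff₀ (by positivity)]
        nlinarith
      rw [Real.dist_eq, sub_zero]
      exact lt_of_le_of_lt hkey hlt
    have hf3 : Tendsto (fun n => Real.exp (I (u n / s) - I (u n))) atTop (nhds 1) := by
      have h := (Real.continuous_exp.tendsto 0).comp hdiff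
      simpa [Function.comp_def] using h
    have hcomb : Tendsto
        (fun n => s ^ α * (cfun (u n / s) / cfun (u n)) * Real.exp (I (u n / s) - I (u n)))
        atTop (nhds (s ^ α)) := by
      have h := ((tendsto_const_nhds (x := s ^ α) (f := atTop)).mul hf2).mul hf3
      simpa using h
    apply hcomb.congr'
    filter_upwards [hu.eventually_ge_atTop (max Tc 1)] with n hn
    have hun0 : 0 < u n := lt_of_lt_of_le one_pos (le_trans (le_max_right _ _) hn)
    have hcv : cfun (u n) ≠ 0 :=
      ne_of_gt (lt_of_lt_of_le (by positivity) (hTc (u n) (le_trans (le_max_left _ _) hn)).1)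
    exact (ratio_eq (u n) s hun0 hs hcv).symm
  -- integrable bound helpers
  have helper : ∀ q : ℝ, -1 < q →
      IntegrableOn (fun s => Real.exp (-s) * (1+s) * s ^ q) (Set.Ioi (0:ℝ)) := by
    intro q hq
    have h1 := Real.GammaIntegral_convergent (show (0:ℝ) < q+1 by linarith)
    have h2 := Real.GammaIntegral_convergent (show (0:ℝ) < q+2 by linarith)
    refine IntegrableOn.congr_fun (h1.add h2) (fun x hx => ?_) measurableSet_Ioi
    have hx0 : (0:ℝ) < x := hx
    simp only [Pi.add_apply]
    rw [show q+1-1 = q by ring, show q+2-1 = q+1 by ring, Real.rpow_add_one (ne_of_gt hx0)]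
    ring
  have hq1 : (-1:ℝ) < α - δ₀ := by rw [hδ₀def]; linarith
  have hq2 : (-1:ℝ) < α + δ₀ := by linarith
  set K : ℝ := 4 + (1/C₀) * T₁ ^ (α + δ₀) with hKdef
  have hK4 : (4:ℝ) ≤ K := by
    rw [hKdef]
    have : 0 ≤ (1/C₀) * T₁ ^ (α + δ₀) := by positivity
    linarith
  clear_value K
  set bound : ℝ → ℝ :=
    fun s => Real.exp (-s) * (1+s) * (K * (s ^ (α-δ₀) + s ^ (α+δ₀))) with hbdef
  have hbint : Integrable bound (volume.restrict (Set.Ioi (0:ℝ))) := by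
    have h := ((helper _ hq1).const_mul K).add ((helper _ hq2).const_mul K)
    apply h.congr
    filter_upwards with s
    simp only [Pi.add_apply]
    rw [hbdef]
    ring
  -- value of the limit integral
  have hval : ∫ s in Set.Ioi (0:ℝ), Real.exp (-s) * (1-s) * s ^ α
      = Real.Gamma (α+1) - Real.Gamma (α+2) := by
    have g1 := Real.GammaIntegral_convergent (show (0:ℝ) < α+1 by linarith)
    have g2 := Real.GammaIntegral_convergent (show (0:ℝ) < α+2 by linarith)
    rw [Real.Gamma_eq_integral (show (0:ℝ) < α+1 by linarith),
      Real.Gamma_eq_integral (show (0:ℝ) < α+2 by linarith), ← integral_sub g1 g2]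
    refine setIntegral_congr_fun measurableSet_Ioi (fun x hx => ?_)
    have hx0 : (0:ℝ) < x := hx
    rw [show α+1-1 = α by ring, show α+2-1 = α+1 by ring, Real.rpow_add_one (ne_of_gt hx0)]
    ring
  rw [← hval]
  refine MeasureTheory.tendsto_integral_filter_of_dominated_convergence bound ?_ ?_ hbint ?_
  · filter_upwards with n
    apply Measurable.aestronglyMeasurable
    fun_prop
  · filter_upwards [hu.eventually_ge_atTop T₁] with n hn
    rw [ae_restrict_iff' measurableSet_Ioi]
    filter_upwards with s hs
    have hs0 : 0 < s := hs
    have hun0 : 0 < u n := lt_of_lt_of_le hT₁pos hn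
    have hR0 : 0 ≤ G (s/u n) / G (1/u n) :=
      le_of_lt (div_pos (hGpos _ (by positivity)) (hGpos _ (by positivity)))
    have hA0 : (0:ℝ) ≤ s ^ (α-δ₀) := Real.rpow_nonneg hs0.le _
    have hB0 : (0:ℝ) ≤ s ^ (α+δ₀) := Real.rpow_nonneg hs0.le _
    have hRb : G (s/u n) / G (1/u n) ≤ K * (s^(α-δ₀) + s^(α+δ₀)) := by
      rcases le_or_gt s (u n / T₁) with hcase | hcase
      · have hms : s * T₁ ≤ u n := (le_div_iff₀ hT₁pos).mp hcase
        have hT1s : T₁ ≤ u n / s := by rw [le_div_iff₀ hs0]; nlinarith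
        have h := hPotter (u n) s hn hs0 hT1s
        calc G (s/u n) / G (1/u n) ≤ 4 * (s^(α-δ₀) + s^(α+δ₀)) := h
          _ ≤ K * (s^(α-δ₀) + s^(α+δ₀)) := by
              apply mul_le_mul_of_nonneg_right hK4 (by positivity)
      · have h1 : G (s/u n) / G (1/u n) ≤ 1 / G (1/u n) :=
          div_le_div₀ zero_le_one (hGle _ (by positivity)) (hGpos _ (by positivity)) le_rfl
        have h2 := hginv (u n) hn
        have h3 : u n ≤ T₁ * s := by nlinarith [(div_lt_iff₀ hT₁pos).mp hcase]
        have h4 : u n ^ (α+δ₀) ≤ (T₁*s) ^ (α+δ₀) :=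
          Real.rpow_le_rpow hun0.le h3 (by positivity)
        have h5 : (T₁*s) ^ (α+δ₀) = T₁^(α+δ₀) * s^(α+δ₀) :=
          Real.mul_rpow hT₁pos.le hs0.le
        have hq : (0:ℝ) ≤ (1/C₀) * T₁^(α+δ₀) := by positivity
        calc G (s/u n) / G (1/u n) ≤ 1 / G (1/u n) := h1
          _ ≤ (1/C₀) * u n ^ (α+δ₀) := h2
          _ ≤ (1/C₀) * (T₁^(α+δ₀) * s^(α+δ₀)) := by
              rw [← h5]
              apply mul_le_mul_of_nonneg_left h4 (by positivity)
          _ ≤ K * (s^(α-δ₀) + s^(α+δ₀)) := by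
              rw [hKdef]
              nlinarith
    have hnorm : ‖Real.exp (-s) * (1-s) * (G (s/u n) / G (1/u n))‖
        = Real.exp (-s) * |1-s| * (G (s/u n) / G (1/u n)) := by
      rw [norm_mul, norm_mul, Real.norm_eq_abs, Real.norm_eq_abs, Real.norm_eq_abs,
        abs_of_pos (Real.exp_pos _), abs_of_nonneg hR0]
    rw [hnorm, hbdef]
    have habs : |1-s| ≤ 1+s := abs_le.mpr ⟨by linarith, by linarith⟩
    have hfinal : Real.exp (-s) * |1-s| * (G (s/u n) / G (1/u n))
        ≤ Real.exp (-s) * (1+s) * (K * (s^(α-δ₀) + s^(α+δ₀))) := by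
      apply mul_le_mul
      · apply mul_le_mul le_rfl habs (abs_nonneg _) (Real.exp_pos _).le
      · exact hRb
      · exact hR0
      · positivity
    exact hfinal
  · rw [ae_restrict_iff' measurableSet_Ioi]
    filter_upwards with s hs
    exact (hpt s hs).const_mul (Real.exp (-s) * (1-s))



end Stmt13Aux

open MeasureTheory ProbabilityTheory Filter

/-- if the cdf `F` of `ξ` (with right endpoint 0) admits the Karamata
representation `1 − F(−x) = x^α c(1/x) exp(∫_1^{1/x} ε(t)/t dt)` with `c(t) → c > 0`
and `ε(t) → 0`, then for any `u_N → ∞`,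
`E[u_N ξ e^{u_N ξ}] ∼ (1 − F(−1/u_N)) (Γ(1+α) − Γ(α+2))` as `N → ∞`. -/
theorem stmt_13 {Ω : Type*} [MeasureSpace Ω] [IsProbabilityMeasure (ℙ : Measure Ω)]
    (α : ℝ) (hα : 0 < α)
    (ξ : Ω → ℝ) (hξ : Measurable ξ) (hle : ∀ᵐ ω ∂ℙ, ξ ω ≤ 0)
    (F : ℝ → ℝ) (hF : ∀ x : ℝ, F x = (ℙ {ω | ξ ω ≤ x}).toReal)
    (hend : ∀ x : ℝ, x < 0 → F x < 1)
    (cfun εfun : ℝ → ℝ) (c : ℝ) (hc : 0 < c)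
    (hcfun : Tendsto cfun atTop (nhds c))
    (hεfun : Tendsto εfun atTop (nhds 0))
    (hrep : ∀ x : ℝ, 0 < x →
      1 - F (-x) = x ^ α * cfun (1 / x) * Real.exp (∫ t in (1 : ℝ)..(1 / x), εfun t / t))
    (u : ℕ → ℝ) (hu : Tendsto u atTop atTop) :
    Tendsto
      (fun n : ℕ =>
        (∫ ω, u n * ξ ω * Real.exp (u n * ξ ω) ∂ℙ) /
          ((1 - F (-(1 / u n))) * (Real.Gamma (1 + α) - Real.Gamma (α + 2))))
      atTop (nhds 1) := by
  have hFmono : Monotone F := by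
    intro a b hab
    rw [hF a, hF b]
    apply ENNReal.toReal_le_toReal (measure_ne_top _ _) (measure_ne_top _ _) |>.mpr
    exact measure_mono (fun ω hω => le_trans hω hab)
  have hFm : Measurable F := hFmono.measurable
  have hF0 : ∀ x, 0 ≤ F x := fun x => by rw [hF x]; exact ENNReal.toReal_nonneg
  set G : ℝ → ℝ := fun x => 1 - F (-x) with hGdef
  have hGm : Measurable G := measurable_const.sub (hFm.comp measurable_neg)
  have hGpos : ∀ x : ℝ, 0 < x → 0 < G x := fun x hx =>
    sub_pos.mpr (hend (-x) (by linarith))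
  have hGle : ∀ x : ℝ, 0 < x → G x ≤ 1 := fun x hx => by
    have := hF0 (-x)
    simp only [hGdef]
    linarith
  have hrepG : ∀ x : ℝ, 0 < x →
      G x = x ^ α * cfun (1/x) * Real.exp (∫ t in (1:ℝ)..(1/x), εfun t / t) :=
    fun x hx => hrep x hx
  have hkey := Stmt13Aux.key α hα c hc cfun εfun hcfun hεfun G hGm hGpos hGle hrepG u hu
  set I0 : ℝ := Real.Gamma (α+1) - Real.Gamma (α+2) with hI0def
  have hΓpos : 0 < Real.Gamma (α+1) := Real.Gamma_pos_of_pos (by linarith)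
  have hΓ2 : Real.Gamma (α+2) = (α+1) * Real.Gamma (α+1) := by
    rw [show α+2 = (α+1)+1 by ring, Real.Gamma_add_one (by positivity : α+1 ≠ 0)]
  have hI0ne : I0 ≠ 0 := by
    rw [hI0def, hΓ2]
    intro hcon
    nlinarith
  have h1 : Tendsto (fun n => (∫ s in Set.Ioi (0:ℝ),
      Real.exp (-s) * (1 - s) * (G (s / u n) / G (1 / u n))) / I0) atTop (nhds 1) := by
    have h2 := hkey.div_const I0
    rwa [show (Real.Gamma (α+1) - Real.Gamma (α+2)) / I0 = 1 by
      rw [← hI0def]; exact div_self hI0ne] at h2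
  refine Tendsto.congr' ?_ h1
  filter_upwards [hu.eventually_gt_atTop 0] with n hn
  have hGn : 0 < G (1 / u n) := hGpos _ (by positivity)
  have hrepE := Stmt13Aux.rep ξ hξ hle F hF hFm (u n) hn
  have hsplit : ∫ s in Set.Ioi (0:ℝ), Real.exp (-s) * (1 - s) * (1 - F (-(s / u n)))
      = G (1 / u n) * ∫ s in Set.Ioi (0:ℝ),
          Real.exp (-s) * (1 - s) * (G (s / u n) / G (1 / u n)) := by
    rw [← integral_const_mul]
    refine setIntegral_congr_fun measurableSet_Ioi (fun s hs => ?_)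
    have hGs : (1 : ℝ) - F (-(s / u n)) = G (s / u n) := rfl
    rw [hGs]
    field_simp
  rw [hrepE, hsplit, show Real.Gamma (1+α) = Real.Gamma (α+1) by rw [add_comm],
    show (1:ℝ) - F (-(1 / u n)) = G (1 / u n) from rfl, ← hI0def,
    mul_div_mul_left _ _ (ne_of_gt hGn)]
end

section
/- Stochastic domination of point measures is preserved by the branching-selection dynamics: if ν, μ are finite point measures on ℝ with ν[x,∞) ≤ μ[x,∞) for all x (written ν ≺ μ), and if both populations are evolved one step by adding to each atom displacements coming from a coupled family of displacements in which each atom of ν uses values that are pointwise ≤ the values used by the corresponding dominating atom of μ, and then ν keeps its M largest offspring while μ keeps at least M largest offspring, then the resulting measures still satisfy ν' ≺ μ'. -/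
/-- The number of atoms of the finite point measure (multiset) `s` lying in `[t, ∞)`. -/
noncomputable def tailCount (s : Multiset ℝ) (t : ℝ) : ℕ := (s.filter (fun a => t ≤ a)).card

/-- `s'` consists of (min `M` card) largest elements of `s`. -/
def IsTopSelection (M : ℕ) (s s' : Multiset ℝ) : Prop :=
  s' ≤ s ∧ Multiset.card s' = min M (Multiset.card s) ∧
    ∀ a ∈ s', ∀ b ∈ s - s', b ≤ a

lemma tailCount_le_card (s : Multiset ℝ) (t : ℝ) : tailCount s t ≤ Multiset.card s :=
  Multiset.card_le_card (Multiset.filter_le _ _)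

lemma tailCount_mono {s u : Multiset ℝ} (h : s ≤ u) (t : ℝ) :
    tailCount s t ≤ tailCount u t :=
  Multiset.card_le_card (Multiset.filter_le_filter _ h)

lemma tailCount_top {Msel : ℕ} {s s' : Multiset ℝ} (h : IsTopSelection Msel s s') (t : ℝ) :
    tailCount s' t = min (Multiset.card s') (tailCount s t) := by
  obtain ⟨hle, hcard, hd⟩ := h
  refine le_antisymm (le_min (tailCount_le_card _ _) (tailCount_mono hle t)) ?_
  obtain ⟨u, rfl⟩ := Multiset.le_iff_exists_add.mp hle
  have hu : s' + u - s' = u := by simp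
  rw [hu] at hd
  have hsplit : tailCount (s' + u) t = tailCount s' t + tailCount u t := by
    unfold tailCount; rw [Multiset.filter_add, Multiset.card_add]
  by_cases h0 : tailCount u t = 0
  · calc min (Multiset.card s') (tailCount (s' + u) t) ≤ tailCount (s' + u) t := min_le_right _ _
      _ = tailCount s' t := by omega
  · obtain ⟨b, hb⟩ := Multiset.card_pos_iff_exists_mem.mp (Nat.pos_of_ne_zero h0)
    rw [Multiset.mem_filter] at hb
    have : tailCount s' t = Multiset.card s' := by
      unfold tailCount
      congr 1
      rw [Multiset.filter_eq_self]
      exact fun a ha => hb.2.trans (hd a ha b hb.1)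
    rw [this]; exact min_le_left _ _

/-- stochastic domination of point measures is preserved by one step of
the branching-selection dynamics. The atoms `x` of `ν` are matched injectively (via `φ`)
with dominating atoms `y ∘ φ` of `μ`; each atom `x i` branches with displacements
`d i l`, `l < K`, coupled pointwise below the displacements `e i l` used by the
dominating atom `y (φ i)`; the offspring of `μ` contain all the points
`y (φ i) + e i l`. Then selecting the `M` largest offspring of `ν` and at least `M`
largest offspring of `μ` preserves the domination `ν' ≺ μ'`
(i.e. `ν'[t,∞) ≤ μ'[t,∞)` for all `t`). -/
theorem stmt_17 {n m K : ℕ}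
    (x : Fin n → ℝ) (y : Fin m → ℝ)
    (φ : Fin n ↪ Fin m) (hφ : ∀ i, x i ≤ y (φ i))
    (hdom : ∀ t : ℝ,
      (Finset.univ.filter (fun i : Fin n => t ≤ x i)).card ≤
      (Finset.univ.filter (fun j : Fin m => t ≤ y j)).card)
    (d e : Fin n → Fin K → ℝ) (hde : ∀ i l, d i l ≤ e i l)
    (Oμ : Multiset ℝ)
    (hOμ : ((Finset.univ : Finset (Fin n × Fin K)).val.map
        (fun p => y (φ p.1) + e p.1 p.2)) ≤ Oμ)
    (M M' : ℕ) (hMM' : M ≤ M')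
    (ν' μ' : Multiset ℝ)
    (hν' : IsTopSelection M
      (((Finset.univ : Finset (Fin n × Fin K)).val.map (fun p => x p.1 + d p.1 p.2))) ν')
    (hμ' : IsTopSelection M' Oμ μ') :
    ∀ t : ℝ, tailCount ν' t ≤ tailCount μ' t := by
  intro t
  set Oν := ((Finset.univ : Finset (Fin n × Fin K)).val.map (fun p => x p.1 + d p.1 p.2))
  set Oμ' := ((Finset.univ : Finset (Fin n × Fin K)).val.map
      (fun p => y (φ p.1) + e p.1 p.2))
  have key : tailCount Oν t ≤ tailCount Oμ' t := by
    unfold tailCount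
    rw [← Multiset.countP_eq_card_filter, ← Multiset.countP_eq_card_filter,
      Multiset.countP_map, Multiset.countP_map]
    apply Multiset.card_le_card
    apply Multiset.monotone_filter_right
    intro p hp
    exact hp.trans (add_le_add (hφ p.1) (hde p.1 p.2))
  have hOν : tailCount Oν t ≤ tailCount Oμ t := key.trans (tailCount_mono hOμ t)
  rw [tailCount_top hν' t, tailCount_top hμ' t, hν'.2.1, hμ'.2.1]
  have h1 : tailCount Oν t ≤ Multiset.card Oν := tailCount_le_card _ _
  have h2 : tailCount Oμ t ≤ Multiset.card Oμ := tailCount_le_card _ _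
  omega
end
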